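/- arXiv:math-ph/0702092 — 2 statements merged into one kernel-verified Lean document; each statement's English description precedes it below -/
import Mathlib

section
/- Let η : [0,∞) → [0,∞) be a C¹ function with η' absolutely continuous, satisfying η''(δ) ≥ 2μ η(δ) for a.e. δ ≥ 0 with μ > 0, with η(δ) → 0 and η'(δ) → 0 as δ → ∞. Then η'(δ) ≤ 0 for all δ ≥ 0, η'(t)² ≥ 2μ η(t)² for all t ≥ 0, and consequently η(δ) ≤ η(0) e^{−√(2μ) δ} for all δ ≥ 0. -/
/-!
With `c = √(2μ)`, the function `G = η' + c η` satisfies `G' = η'' + c η' ≥ c² η + c η' = c G`.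
Since `η''` is only an a.e. derivative, this is used in the integrated form
`c ∫ₘᵗ G ≤ G t - G m`, which shows that `G` increases to the right of any point where it is
positive. So `G` has no positive maximum, and as `G → 0` at infinity, `G ≤ 0`. The inequality
`η' ≤ -c η` gives everything: `η' ≤ 0` as `η ≥ 0`, squaring gives `η'² ≥ 2μ η²`, and
`(η e^{c δ})' = (η' + c η) e^{c δ} ≤ 0`.
-/

open MeasureTheory Set Filter Topology

section MaximumPrinciple

variable {G : ℝ → ℝ}

theorem nonpos_of_tendsto_zero_of_forall_pos_exists_gt {a : ℝ} (hG : ContinuousOn G (Ici a))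
    (hlim : Tendsto G atTop (𝓝 0)) (hgrow : ∀ m, a ≤ m → 0 < G m → ∃ t ≥ m, G m < G t) :
    ∀ x, a ≤ x → G x ≤ 0 := by
  intro x hx
  by_contra! hpos
  obtain ⟨T, hT⟩ := eventually_atTop.1 (hlim.eventually (ge_mem_nhds hpos))
  obtain ⟨m, hm, hmax⟩ : ∃ m ∈ Ici a, IsMaxOn G (Ici a) m := by
    refine hG.exists_isMaxOn' isClosed_Ici hx
      (mem_inf_of_inter (isCompact_Icc (a := a) (b := T)).compl_mem_cocompact
        (mem_principal_self _) fun y ⟨hyK, hy⟩ => hT y ?_)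
    by_contra! hyT
    exact hyK ⟨hy, hyT.le⟩
  obtain ⟨t, hmt, hlt⟩ := hgrow m hm (hpos.trans_le (hmax hx))
  exact (hmax (hm.trans hmt : a ≤ t)).not_gt hlt

theorem exists_gt_of_mul_integral_le_sub {c m : ℝ} (hc : 0 < c) (hG : ContinuousOn G (Ici m))
    (hm : 0 < G m) (hgrow : ∀ t, m ≤ t → c * ∫ x in m..t, G x ≤ G t - G m) :
    ∃ t ≥ m, G m < G t := by
  obtain ⟨t, hmt, hpos⟩ : ∃ t, m < t ∧ Icc m t ⊆ {x | 0 < G x} :=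
    mem_nhdsGE_iff_exists_Icc_subset.1 ((hG m self_mem_Ici).eventually (lt_mem_nhds hm))
  have hint : 0 < ∫ x in m..t, G x :=
    intervalIntegral.intervalIntegral_pos_of_pos_on
      ((hG.mono Icc_subset_Ici_self).intervalIntegrable_of_Icc hmt.le)
      (fun x hx => hpos (Ioo_subset_Icc_self hx)) hmt
  exact ⟨t, hmt.le, by nlinarith [hgrow t hmt.le, mul_pos hc hint]⟩

end MaximumPrinciple

section SecondOrder

variable {f f' f'' : ℝ → ℝ} {a c : ℝ}

theorem mul_integral_deriv_add_le_sub {m t : ℝ} (ham : a ≤ m) (hmt : m ≤ t)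
    (hf : ∀ x, a ≤ x → HasDerivWithinAt f (f' x) (Ici a) x) (hf' : ContinuousOn f' (Ici a))
    (hf'' : ∀ x, a ≤ x → f' x = f' a + ∫ y in a..x, f'' y)
    (hf''int : ∀ x, a ≤ x → IntervalIntegrable f'' volume a x)
    (hineq : ∀ᵐ x, a ≤ x → c ^ 2 * f x ≤ f'' x) :
    c * ∫ x in m..t, (f' x + c * f x) ≤ (f' t + c * f t) - (f' m + c * f m) := by
  have hsub : Icc m t ⊆ Ici a := fun x hx => ham.trans hx.1
  have hfcont : ContinuousOn f (Icc m t) :=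
    fun x hx => ((hf x (hsub hx)).continuousWithinAt).mono hsub
  have hfint : IntervalIntegrable f volume m t := hfcont.intervalIntegrable_of_Icc hmt
  have hf'int : IntervalIntegrable f' volume m t := (hf'.mono hsub).intervalIntegrable_of_Icc hmt
  have hf''int' : IntervalIntegrable f'' volume m t :=
    (hf''int m ham).symm.trans (hf''int t (ham.trans hmt))
  have hFTC : ∫ x in m..t, f' x = f t - f m :=
    intervalIntegral.integral_eq_sub_of_hasDeriv_right_of_le hmt hfcont
      (fun x hx => (hf x (ham.trans hx.1.le)).mono (Ioi_subset_Ici_self.trans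
        (Ici_subset_Ici.2 (ham.trans hx.1.le)))) hf'int
  have hjump : f' t - f' m = ∫ x in m..t, f'' x := by
    rw [hf'' t (ham.trans hmt), hf'' m ham,
      ← intervalIntegral.integral_interval_sub_left (hf''int t (ham.trans hmt)) (hf''int m ham)]
    ring
  have hmono : ∫ x in m..t, c ^ 2 * f x ≤ ∫ x in m..t, f'' x :=
    intervalIntegral.integral_mono_ae_restrict hmt (hfint.const_mul _) hf''int' <| by
      filter_upwards [ae_restrict_of_ae hineq, ae_restrict_mem measurableSet_Icc] with x h hx
      exact h (ham.trans hx.1)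
  rw [intervalIntegral.integral_const_mul] at hmono
  rw [intervalIntegral.integral_add hf'int (hfint.const_mul c), intervalIntegral.integral_const_mul,
    hFTC]
  linear_combination hmono - hjump

theorem deriv_add_mul_nonpos_of_sq_mul_le_second_deriv (hc : 0 < c)
    (hf : ∀ x, a ≤ x → HasDerivWithinAt f (f' x) (Ici a) x) (hf' : ContinuousOn f' (Ici a))
    (hf'' : ∀ x, a ≤ x → f' x = f' a + ∫ y in a..x, f'' y)
    (hf''int : ∀ x, a ≤ x → IntervalIntegrable f'' volume a x)
    (hineq : ∀ᵐ x, a ≤ x → c ^ 2 * f x ≤ f'' x)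
    (hlim : Tendsto f atTop (𝓝 0)) (hlim' : Tendsto f' atTop (𝓝 0)) :
    ∀ x, a ≤ x → f' x + c * f x ≤ 0 := by
  have hcont : ContinuousOn (fun x => f' x + c * f x) (Ici a) :=
    hf'.add (continuousOn_const.mul fun x hx => (hf x hx).continuousWithinAt)
  refine nonpos_of_tendsto_zero_of_forall_pos_exists_gt hcont
    (by simpa using hlim'.add (hlim.const_mul c)) fun m hm hpos => ?_
  exact exists_gt_of_mul_integral_le_sub hc (hcont.mono (Ici_subset_Ici.2 hm)) hpos
    fun t hmt => mul_integral_deriv_add_le_sub hm hmt hf hf' hf'' hf''int hineq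

theorem antitoneOn_mul_exp_of_deriv_add_mul_nonpos
    (hf : ∀ x, a ≤ x → HasDerivWithinAt f (f' x) (Ici a) x)
    (hle : ∀ x, a ≤ x → f' x + c * f x ≤ 0) :
    AntitoneOn (fun x => f x * Real.exp (c * x)) (Ici a) := by
  have hexp (x : ℝ) : HasDerivAt (fun x => Real.exp (c * x)) (Real.exp (c * x) * c) x :=
    (Real.hasDerivAt_exp _).comp x ((hasDerivAt_id x).const_mul c |>.congr_deriv (mul_one c))
  refine antitoneOn_of_hasDerivWithinAt_nonpos (convex_Ici a)
    (f' := fun x => (f' x + c * f x) * Real.exp (c * x))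
    (fun x hx => (hf x hx).continuousWithinAt.mul (hexp x).continuousAt.continuousWithinAt)
    (fun x hx => ?_) fun x hx => ?_
  · rw [interior_Ici] at hx ⊢
    exact (((hf x (le_of_lt hx)).mono Ioi_subset_Ici_self).mul (hexp x).hasDerivWithinAt).congr_deriv
      (by ring)
  · rw [interior_Ici] at hx
    exact mul_nonpos_of_nonpos_of_nonneg (hle x (le_of_lt hx)) (Real.exp_pos _).le

end SecondOrder

/-- Gronwall-type differential inequality: if η ≥ 0 is C¹ on
[0,∞) with absolutely continuous derivative, η'' ≥ 2μη a.e. (μ > 0), and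
η, η' → 0 at +∞, then η' ≤ 0 on [0,∞), η'(t)² ≥ 2μ η(t)² for all t ≥ 0,
and η(δ) ≤ η(0) e^{−√(2μ) δ} for all δ ≥ 0. -/
theorem gronwall_convexity_decay
    (μ : ℝ) (hμ : 0 < μ) (η η' η'' : ℝ → ℝ)
    (hnonneg : ∀ δ : ℝ, 0 ≤ δ → 0 ≤ η δ)
    -- η is C¹ on [0,∞) with derivative η'
    (hC1 : ∀ δ : ℝ, 0 ≤ δ → HasDerivWithinAt η (η' δ) (Ici 0) δ)
    (hη'cont : ContinuousOn η' (Ici 0))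
    -- η' is absolutely continuous with derivative η''
    (hAC : ∀ δ : ℝ, 0 ≤ δ → η' δ = η' 0 + ∫ s in (0:ℝ)..δ, η'' s)
    (hη''int : ∀ δ : ℝ, 0 ≤ δ → IntervalIntegrable η'' volume 0 δ)
    -- the convexity inequality η'' ≥ 2μη a.e. on [0,∞)
    (hineq : ∀ᵐ δ ∂volume, 0 ≤ δ → 2 * μ * η δ ≤ η'' δ)
    -- decay at infinity
    (hlim : Tendsto η atTop (𝓝 0))
    (hlim' : Tendsto η' atTop (𝓝 0)) :
    (∀ δ : ℝ, 0 ≤ δ → η' δ ≤ 0) ∧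
    (∀ t : ℝ, 0 ≤ t → 2 * μ * (η t) ^ 2 ≤ (η' t) ^ 2) ∧
    (∀ δ : ℝ, 0 ≤ δ → η δ ≤ η 0 * Real.exp (-Real.sqrt (2 * μ) * δ)) := by
  set c := Real.sqrt (2 * μ)
  have hc : 0 < c := Real.sqrt_pos.2 (by positivity)
  have hc2 : c ^ 2 = 2 * μ := Real.sq_sqrt (by positivity)
  have hslope : ∀ δ, 0 ≤ δ → η' δ + c * η δ ≤ 0 :=
    deriv_add_mul_nonpos_of_sq_mul_le_second_deriv hc hC1 hη'cont hAC hη''int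
      (by rwa [hc2]) hlim hlim'
  have hdecay := antitoneOn_mul_exp_of_deriv_add_mul_nonpos hC1 hslope
  refine ⟨fun δ hδ => ?_, fun t ht => ?_, fun δ hδ => ?_⟩
  · nlinarith [hslope δ hδ, hnonneg δ hδ]
  · have hcη : 0 ≤ c * η t := mul_nonneg hc.le (hnonneg t ht)
    calc 2 * μ * η t ^ 2 = (c * η t) ^ 2 := by rw [mul_pow, hc2]
      _ ≤ (-η' t) ^ 2 := pow_le_pow_left₀ hcη (by linarith [hslope t ht]) 2
      _ = η' t ^ 2 := neg_sq _
  · calc η δ = η δ * Real.exp (c * δ) * Real.exp (-c * δ) := by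
          rw [mul_assoc, ← Real.exp_add]; simp
      _ ≤ η 0 * Real.exp (-c * δ) := by
          gcongr
          simpa using hdecay self_mem_Ici hδ hδ
end

section
/- Under the setup of the oscillator-expansion lemma (h₀(k) = h_B(k) + V₀, V₀ ≥ 0, normalized eigenfunction φ_j with eigenvalue ω_j(k) ∈ (E_n(B), E_{n+1}(B))), letting P_n(k) be the orthogonal projection onto span{ψ_0(·;k),…,ψ_n(·;k)}, one has |⟨φ_j(·;k), V₀ P_n(k) φ_j(·;k)⟩| ≥ (ω_j(k) − E_n(B))(E_{n+1}(B) − ω_j(k)) / (2B(n+1)) > 0. -/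
open MeasureTheory Set Filter Topology

/-- lower bound on |⟨φ_j, V₀ P_n(k) φ_j⟩|: with P_n(k) the
projection onto the lowest n+1 oscillator modes,
|⟨φ, V₀ P_n φ⟩| ≥ (ω − E_n(B))(E_{n+1}(B) − ω)/(2B(n+1)) > 0. -/
theorem matrix_element_V0_Pn_lower_bound
    (B ω : ℝ) (hB : 0 < B) (n : ℕ)
    (V₀ φ : ℝ → ℝ) (ψosc : ℕ → ℝ → ℝ) (α : ℕ → ℝ)
    (hV₀nonneg : ∀ x, 0 ≤ V₀ x)
    -- orthonormality of the oscillator eigenfunctions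
    (hortho : ∀ m l : ℕ, ∫ x, ψosc m x * ψosc l x = if m = l then (1:ℝ) else 0)
    -- φ is normalized
    (hnormφ : ∫ x, (φ x) ^ 2 = 1)
    -- the expansion coefficients
    (hα : ∀ m, α m = ∫ x, φ x * ψosc m x)
    -- ω lies strictly between E_n(B) = (2n+1)B and E_{n+1}(B) = (2n+3)B
    (hωlo : (2 * (n:ℝ) + 1) * B < ω) (hωhi : ω < (2 * (n:ℝ) + 3) * B)
    -- Parseval
    (hParseval : ∑' (m : ℕ), (α m) ^ 2 = 1)
    -- spectral expansion of ⟨φ, V₀ φ⟩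
    (hSummable : Summable (fun m : ℕ => (ω - (2 * (m:ℝ) + 1) * B) * (α m) ^ 2))
    (hexp : ∫ x, V₀ x * (φ x) ^ 2
      = ∑' (m : ℕ), (ω - (2 * (m:ℝ) + 1) * B) * (α m) ^ 2)
    -- the key identity ⟨φ, V₀ P_n φ⟩ = Σ_{m ≤ n} (ω − E_m(B)) α_m²
    (hPn : ∫ x, φ x * (V₀ x * ∑ m ∈ Finset.range (n + 1), α m * ψosc m x)
      = ∑ m ∈ Finset.range (n + 1), (ω - (2 * (m:ℝ) + 1) * B) * (α m) ^ 2) :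
    (ω - (2 * (n:ℝ) + 1) * B) * ((2 * (n:ℝ) + 3) * B - ω) / (2 * B * (n + 1))
      ≤ |∫ x, φ x * (V₀ x * ∑ m ∈ Finset.range (n + 1), α m * ψosc m x)| ∧
    0 < (ω - (2 * (n:ℝ) + 1) * B) * ((2 * (n:ℝ) + 3) * B - ω)
      / (2 * B * (n + 1)) := by
  have hapos : 0 < ω - (2 * (n:ℝ) + 1) * B := by linarith
  have hbpos : 0 < (2 * (n:ℝ) + 3) * B - ω := by linarith
  have hdenpos : (0:ℝ) < 2 * B * (n + 1) := by positivity
  set a := ω - (2 * (n:ℝ) + 1) * B with ha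
  set b := (2 * (n:ℝ) + 3) * B - ω with hb
  have hsum2 : Summable (fun m : ℕ => (α m) ^ 2) := by
    by_contra h
    rw [tsum_eq_zero_of_not_summable h] at hParseval
    norm_num at hParseval
  set S := ∑ m ∈ Finset.range (n + 1), (ω - (2 * (m:ℝ) + 1) * B) * (α m) ^ 2 with hS
  set s := ∑ m ∈ Finset.range (n + 1), (α m) ^ 2 with hs
  set t := ∑' (m : ↥((↑(Finset.range (n + 1)) : Set ℕ)ᶜ)), (α (m:ℕ)) ^ 2 with htdef
  have htsum : Summable (fun m : ↥((↑(Finset.range (n + 1)) : Set ℕ)ᶜ)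
      => (α (m:ℕ)) ^ 2) := hsum2.subtype _
  have hst : s + t = 1 := by
    rw [← hParseval]
    exact Summable.sum_add_tsum_compl hsum2
  have htnonneg : 0 ≤ t := tsum_nonneg fun m => sq_nonneg _
  have hsnonneg : 0 ≤ s := Finset.sum_nonneg fun m _ => sq_nonneg _
  have hSas : a * s ≤ S := by
    rw [hS, hs, Finset.mul_sum]
    apply Finset.sum_le_sum
    intro m hm
    have hmn : (m:ℝ) ≤ (n:ℝ) := by
      exact_mod_cast Nat.lt_succ_iff.mp (Finset.mem_range.mp hm)
    exact mul_le_mul_of_nonneg_right (by rw [ha]; nlinarith [hB.le]) (sq_nonneg _)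
  have hT : 0 ≤ ∑' (m : ℕ), (ω - (2 * (m:ℝ) + 1) * B) * (α m) ^ 2 := by
    rw [← hexp]
    exact integral_nonneg fun x => mul_nonneg (hV₀nonneg x) (sq_nonneg _)
  have htail : (∑' (m : ↥((↑(Finset.range (n + 1)) : Set ℕ)ᶜ)),
      (ω - (2 * ((m:ℕ):ℝ) + 1) * B) * (α (m:ℕ)) ^ 2) ≤ -b * t := by
    rw [htdef, ← tsum_mul_left]
    apply Summable.tsum_le_tsum _ (hSummable.subtype _) (htsum.mul_left _)
    intro m
    have hm : n + 1 ≤ (m:ℕ) := by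
      have h2 := m.2
      simp only [Set.mem_compl_iff, Finset.coe_range, Set.mem_Iio, not_lt] at h2
      exact h2
    have hm' : (n:ℝ) + 1 ≤ ((m:ℕ):ℝ) := by exact_mod_cast hm
    exact mul_le_mul_of_nonneg_right (by rw [hb]; nlinarith [hB.le]) (sq_nonneg _)
  have hsplit : S + (∑' (m : ↥((↑(Finset.range (n + 1)) : Set ℕ)ᶜ)),
      (ω - (2 * ((m:ℕ):ℝ) + 1) * B) * (α (m:ℕ)) ^ 2)
      = ∑' (m : ℕ), (ω - (2 * (m:ℝ) + 1) * B) * (α m) ^ 2 :=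
    Summable.sum_add_tsum_compl hSummable
  have hSbt : b * t ≤ S := by nlinarith
  have hab : a + b = 2 * B := by rw [ha, hb]; ring
  have hkey : a * b ≤ 2 * B * S := by
    calc a * b = a * b * (s + t) := by rw [hst]; ring
      _ = b * (a * s) + a * (b * t) := by ring
      _ ≤ b * S + a * S :=
          add_le_add (mul_le_mul_of_nonneg_left hSas hbpos.le)
            (mul_le_mul_of_nonneg_left hSbt hapos.le)
      _ = (a + b) * S := by ring
      _ = 2 * B * S := by rw [hab]
  have hSpos : 0 < S := by nlinarith
  rw [hPn]
  constructor
  · rw [abs_of_pos hSpos, div_le_iff₀ hdenpos]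
    have hn : (0:ℝ) ≤ (n:ℝ) := Nat.cast_nonneg n
    nlinarith [mul_nonneg (mul_nonneg hB.le hSpos.le) hn]
  · positivity
end
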